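/- arXiv:1806.08845 — 4 statements merged into one kernel-verified Lean document; each statement's English description precedes it below -/
import Mathlib

section
/- Let a = (a₁,…,a_N) ∈ ℝ^N with all aₖ ≠ 0 and ∑ₖ aₖ = 1, let v ≥ N − 1, and suppose B ∈ ℝ^{v×N} is such that M = aᵀa + BᵀB is diagonal. Set c = (c₁,…,c_N) with cₖ = aₖ/√(mₖₖ) and m = (√m₁₁,…,√m_NN). If in addition ∑ₖ mₖₖ = 1, then aₖ = mₖₖ for every k; in particular aₖ > 0 for all k. -/
/-!
Row sums of `M = aᵀa + BᵀB` are `(∑ a) a + Bᵀ w` with `w = B 𝟙`, so the sum of all entries of `M`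
is `(∑ a)² + ‖w‖²`. When `M` is diagonal its row sums are its diagonal entries; trace `1` and
`∑ a = 1` then force `w = 0`, hence `mₖₖ = aₖ`. Positivity comes from `mₖₖ = aₖ² + ∑ᵢ Bᵢₖ² > 0`.
-/

open Finset

theorem Matrix.sum_row_eq_diag_of_offDiag_eq_zero {ι R : Type*} [Fintype ι] [DecidableEq ι]
    [AddCommMonoid R] {M : Matrix ι ι R} (hdiag : ∀ k t, k ≠ t → M k t = 0) (k : ι) :
    ∑ t, M k t = M k k :=
  Fintype.sum_eq_single k fun t ht => hdiag k t (Ne.symm ht)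

section RankOneAddGram

variable {ι κ : Type*} [Fintype κ] {a : ι → ℝ} {B : Matrix κ ι ℝ}
  {M : Matrix ι ι ℝ}

theorem sum_row_eq_of_rankOne_add_gram [Fintype ι]
    (hM : ∀ k t, M k t = a k * a t + ∑ i, B i k * B i t) (k : ι) : ∑ t, M k t = a k * ∑ t, a t + ∑ i, B i k * ∑ t, B i t := by
  simp only [hM, sum_add_distrib, mul_sum]
  rw [sum_comm]

theorem sum_entries_eq_of_rankOne_add_gram [Fintype ι]
    (hM : ∀ k t, M k t = a k * a t + ∑ i, B i k * B i t) :
    ∑ k, ∑ t, M k t = (∑ t, a t) ^ 2 + ∑ i, (∑ t, B i t) ^ 2 := by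
  simp only [sum_row_eq_of_rankOne_add_gram hM, sum_add_distrib, ← sum_mul, sq]
  rw [sum_comm]
  simp only [← sum_mul]

theorem diag_pos_of_rankOne_add_gram (hM : ∀ k t, M k t = a k * a t + ∑ i, B i k * B i t)
    {k : ι} (hk : a k ≠ 0) : 0 < M k k := by
  rw [hM]
  exact add_pos_of_pos_of_nonneg (mul_self_pos.mpr hk)
    (sum_nonneg fun i _ => mul_self_nonneg (B i k))

end RankOneAddGram

theorem stmt_4_general (N v : ℕ) (a : Fin N → ℝ) (ha : ∀ k, a k ≠ 0)
    (hsum : ∑ k, a k = 1) (B : Matrix (Fin v) (Fin N) ℝ)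
    (M : Matrix (Fin N) (Fin N) ℝ)
    (hM : ∀ k t, M k t = a k * a t + ∑ i : Fin v, B i k * B i t)
    (hdiag : ∀ k t, k ≠ t → M k t = 0)
    (htr : ∑ k, M k k = 1) :
    ∀ k, a k = M k k ∧ 0 < a k := by
  have hrow := Matrix.sum_row_eq_diag_of_offDiag_eq_zero hdiag
  have hB : ∀ i, ∑ t, B i t = 0 := by
    have hsq : ∑ i, (∑ t, B i t) ^ 2 = 0 := by
      have := sum_entries_eq_of_rankOne_add_gram hM
      simp only [hrow, htr, hsum] at this
      linarith
    intro i
    exact pow_eq_zero_iff two_ne_zero |>.mp <|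
      congrFun ((Fintype.sum_eq_zero_iff_of_nonneg fun i => sq_nonneg _).mp hsq) i
  have heq : ∀ k, a k = M k k := fun k => by
    rw [← hrow, sum_row_eq_of_rankOne_add_gram hM, hsum]
    simp [hB]
  exact fun k => ⟨heq k, heq k ▸ diag_pos_of_rankOne_add_gram hM (ha k)⟩

/-- If all `a k ≠ 0`, `∑ a k = 1`, `v ≥ N − 1`, `M = aᵀa + BᵀB` is diagonal and
`∑ₖ mₖₖ = 1`, then `a k = mₖₖ` for every `k`; in particular `a k > 0`. -/
theorem stmt_4 (N v : ℕ) (hv : N - 1 ≤ v) (a : Fin N → ℝ) (ha : ∀ k, a k ≠ 0)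
    (hsum : ∑ k, a k = 1) (B : Matrix (Fin v) (Fin N) ℝ)
    (M : Matrix (Fin N) (Fin N) ℝ)
    (hM : ∀ k t, M k t = a k * a t + ∑ i : Fin v, B i k * B i t)
    (hdiag : ∀ k t, k ≠ t → M k t = 0)
    (htr : ∑ k, M k k = 1) :
    ∀ k, a k = M k k ∧ 0 < a k :=
  stmt_4_general N v a ha hsum B M hM hdiag htr
end

section
/- Let a = (a₁,…,a_N) be a vector of positive real numbers with ∑ₖ aₖ = 1, and let v ≥ N − 1. Then there exists B ∈ ℝ^{v×N} such that aᵀa + BᵀB = diag(a₁,…,a_N). -/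
/-!
Put `c = (√a₁, …, √a_N)`, a unit vector. Completing `c` to an orthonormal basis of `ℝ^N`, the
remaining `N - 1` basis vectors are the rows of a matrix `D` with `c cᵀ + Dᵀ D = 1` (Parseval);
zero rows pad `D` to `v` rows, and `B = D · diag c` gives
`a aᵀ + Bᵀ B = diag c (c cᵀ + Dᵀ D) diag c = diag a`.
-/

open Matrix

theorem exists_vecMulVec_add_transpose_mul_eq_one {ι : Type*} [Fintype ι] [DecidableEq ι]
    {n : ℕ} (hcard : Fintype.card ι = n + 1) (c : EuclideanSpace ℝ ι) (hc : ‖c‖ = 1) :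
    ∃ D : Matrix (Fin n) ι ℝ, vecMulVec c c + Dᵀ * D = 1 := by
  obtain ⟨b, hb⟩ := Orthonormal.exists_orthonormalBasis_extension_of_card_eq (𝕜 := ℝ)
    (by simpa using hcard) (v := fun _ : Fin (n + 1) => c) (s := {Fin.last n})
    (orthonormal_subsingleton_iff.2 fun _ => hc)
  refine ⟨Matrix.of fun i k => b (Fin.castSucc i) k, ?_⟩
  ext k t
  have hparseval := b.sum_inner_mul_inner (EuclideanSpace.single k 1) (EuclideanSpace.single t 1)
  rw [Fin.sum_univ_castSucc, hb _ rfl] at hparseval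
  simpa [vecMulVec_apply, Matrix.mul_apply, Matrix.one_apply, EuclideanSpace.inner_single_left,
    EuclideanSpace.inner_single_right, add_comm, eq_comm] using hparseval

theorem exists_transpose_mul_self_eq_of_le {ι R : Type*} [Fintype ι] [Semiring R]
    {n v : ℕ} (h : n ≤ v) (D : Matrix (Fin n) ι R) :
    ∃ D' : Matrix (Fin v) ι R, D'ᵀ * D' = Dᵀ * D := by
  obtain ⟨m, rfl⟩ := Nat.exists_eq_add_of_le h
  refine ⟨Matrix.of (Fin.append (fun i => D i) 0), ?_⟩
  ext k t
  simp [Matrix.mul_apply, Fin.sum_univ_add]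

theorem vecMulVec_add_transpose_mul_eq_diagonal {m ι R : Type*} [Fintype m] [Fintype ι]
    [DecidableEq ι] [CommRing R] {c : ι → R} {D : Matrix m ι R}
    (h : vecMulVec c c + Dᵀ * D = 1) :
    vecMulVec (c * c) (c * c) + (D * diagonal c)ᵀ * (D * diagonal c) = diagonal (c * c) := by
  have hD : Dᵀ * D = 1 - vecMulVec c c := eq_sub_of_add_eq' h
  rw [transpose_mul, diagonal_transpose, Matrix.mul_assoc, ← Matrix.mul_assoc Dᵀ, hD]
  ext k t
  simp only [Matrix.add_apply, Matrix.mul_diagonal, Matrix.diagonal_mul, Matrix.sub_apply,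
    vecMulVec_apply, Matrix.one_apply, diagonal_apply, Pi.mul_apply]
  split_ifs with hkt
  · subst hkt; ring
  · ring

/-- For positive `a k` summing to `1` and `v ≥ N − 1`, there exists `B ∈ ℝ^{v×N}` with
`aᵀa + BᵀB = diag(a₁,…,a_N)`. -/
theorem stmt_5 (N v : ℕ) (hv : N - 1 ≤ v) (a : Fin N → ℝ) (hpos : ∀ k, 0 < a k)
    (hsum : ∑ k, a k = 1) :
    ∃ B : Matrix (Fin v) (Fin N) ℝ,
      ∀ k t, a k * a t + (∑ i : Fin v, B i k * B i t) = if k = t then a k else 0 := by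
  have hcard : Fintype.card (Fin N) = N - 1 + 1 := by
    rcases N with _ | N
    · simp at hsum
    · simp
  set c : Fin N → ℝ := fun k => √(a k)
  have hcc : c * c = a := funext fun k => Real.mul_self_sqrt (hpos k).le
  have hc : ‖WithLp.toLp 2 c‖ = 1 := by
    simp [EuclideanSpace.norm_eq, c, Real.sq_sqrt (hpos _).le, hsum]
  obtain ⟨D, hD⟩ := exists_vecMulVec_add_transpose_mul_eq_one hcard _ hc
  obtain ⟨B, hB⟩ := exists_transpose_mul_self_eq_of_le hv (D * diagonal c)
  refine ⟨B, fun k t => ?_⟩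
  have hentry := congrFun₂ (vecMulVec_add_transpose_mul_eq_diagonal hD) k t
  rw [← hB, hcc] at hentry
  simpa [vecMulVec_apply, Matrix.mul_apply, diagonal_apply] using hentry
end

section
/- Let a = (a₁,…,a_N) be positive reals with ∑ₖ aₖ = 1, let nₖ ∈ ℤ^s be distinct exponents, and suppose the trigonometric polynomial H₀(γ) = ∑ₖ aₖ e^{2πi nₖ·γ} satisfies H₀(q) = δ_{0,q} for all q ∈ {0, 1/2}^s. If B ∈ ℝ^{v×N} satisfies aᵀa + BᵀB = diag(a₁,…,a_N), then the vector trigonometric polynomial H₁(γ) = B·(e^{2πi nₖ·γ})ₖ satisfies the UEP equations: conj(H₀(γ+q))·H₀(γ) + H₁*(γ+q)·H₁(γ) = δ_{0,q} for all q ∈ {0,1/2}^s and all γ ∈ ℝ^s. -/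
/-! Write `w k γ = exp (2πi nₖ·γ)`. Expanding both Hermitian products gives
`∑ₖ ∑ₜ (aₖaₜ + (BᵀB)ₖₜ) conj (w k (γ + q)) w t γ`, which by `aᵀa + BᵀB = diag a` collapses to
`∑ₖ aₖ conj (w k (γ + q)) w k γ = ∑ₖ aₖ conj (w k q) = conj (H₀ q)`, since `w k` is a character
of unit modulus. The sampling condition `H₀ q = δ₀,q` then finishes the proof. -/

open Complex ComplexConjugate Finset

theorem conj_sum_ofReal_mul_mul_sum {ι : Type*} [Fintype ι] (c : ι → ℝ) (x y : ι → ℂ) :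
    conj (∑ k, (c k : ℂ) * x k) * ∑ t, (c t : ℂ) * y t =
      ∑ k, ∑ t, ((c k * c t : ℝ) : ℂ) * (conj (x k) * y t) := by
  rw [map_sum, sum_mul_sum]
  refine sum_congr rfl fun k _ => sum_congr rfl fun t _ => ?_
  rw [map_mul, conj_ofReal]
  push_cast
  ring

theorem conj_sum_mul_sum_add_sum_conj_mul_sum_of_gram {ι κ : Type*} [Fintype ι] [Fintype κ]
    [DecidableEq ι] (a : ι → ℝ) (B : Matrix κ ι ℝ)
    (hB : ∀ k t, a k * a t + ∑ i, B i k * B i t = if k = t then a k else 0) (x y : ι → ℂ) :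
    conj (∑ k, (a k : ℂ) * x k) * ∑ k, (a k : ℂ) * y k +
        ∑ i, conj (∑ k, (B i k : ℂ) * x k) * ∑ k, (B i k : ℂ) * y k =
      ∑ k, (a k : ℂ) * (conj (x k) * y k) := by
  have hBℂ : ∀ k t, ((a k * a t : ℝ) : ℂ) + ∑ i, ((B i k * B i t : ℝ) : ℂ) =
      if k = t then (a k : ℂ) else 0 := fun k t => by
    rw [← ofReal_sum, ← ofReal_add, hB]
    split_ifs <;> simp
  simp only [conj_sum_ofReal_mul_mul_sum]
  have hswap : ∑ i, ∑ k, ∑ t, ((B i k * B i t : ℝ) : ℂ) * (conj (x k) * y t) =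
      ∑ k, ∑ t, ∑ i, ((B i k * B i t : ℝ) : ℂ) * (conj (x k) * y t) := by
    rw [sum_comm]
    exact sum_congr rfl fun _ _ => sum_comm
  rw [hswap]
  simp only [← sum_add_distrib, ← sum_mul, ← add_mul, hBℂ, ite_mul, zero_mul,
    Fintype.sum_ite_eq]

theorem conj_exp_add_mul_exp {σ : Type*} [Fintype σ] (m : σ → ℤ) (γ q : σ → ℝ) :
    conj (exp (2 * Real.pi * I * ∑ j, (m j : ℂ) * ((γ + q) j : ℂ))) *
        exp (2 * Real.pi * I * ∑ j, (m j : ℂ) * (γ j : ℂ)) =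
      conj (exp (2 * Real.pi * I * ∑ j, (m j : ℂ) * (q j : ℂ))) := by
  rw [← exp_conj, ← exp_conj, ← exp_add]
  congr 1
  simp only [map_mul, map_sum, map_intCast, conj_ofReal, conj_I, map_ofNat, Pi.add_apply,
    ofReal_add, mul_add, sum_add_distrib, map_add]
  ring

theorem stmt_7_general (s N v : ℕ) (a : Fin N → ℝ)
    (n : Fin N → Fin s → ℤ)
    (H0 : (Fin s → ℝ) → ℂ)
    (hH0 : ∀ γ, H0 γ = ∑ k, (a k : ℂ) *
      Complex.exp (2 * Real.pi * Complex.I * ∑ i, (n k i : ℂ) * (γ i : ℂ)))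
    (hUEP0 : ∀ q : Fin s → ℝ, (∀ i, q i = 0 ∨ q i = 1 / 2) →
      H0 q = if q = 0 then 1 else 0)
    (B : Matrix (Fin v) (Fin N) ℝ)
    (hB : ∀ k t, a k * a t + (∑ i : Fin v, B i k * B i t) = if k = t then a k else 0)
    (H1 : Fin v → (Fin s → ℝ) → ℂ)
    (hH1 : ∀ i γ, H1 i γ = ∑ k, (B i k : ℂ) *
      Complex.exp (2 * Real.pi * Complex.I * ∑ j, (n k j : ℂ) * (γ j : ℂ))) :
    ∀ γ q : Fin s → ℝ, (∀ i, q i = 0 ∨ q i = 1 / 2) →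
      (starRingEnd ℂ) (H0 (γ + q)) * H0 γ +
        (∑ i : Fin v, (starRingEnd ℂ) (H1 i (γ + q)) * H1 i γ) =
      if q = 0 then 1 else 0 := by
  intro γ q hq
  calc _ = ∑ k, (a k : ℂ) * conj (exp (2 * Real.pi * I * ∑ j, (n k j : ℂ) * (q j : ℂ))) := by
        simp only [hH0, hH1, conj_sum_mul_sum_add_sum_conj_mul_sum_of_gram a B hB,
          conj_exp_add_mul_exp]
    _ = conj (H0 q) := by simp only [hH0, map_sum, map_mul, conj_ofReal]
    _ = if q = 0 then 1 else 0 := by rw [hUEP0 q hq]; split_ifs <;> simp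

/-- If `H₀(γ) = ∑ₖ aₖ e^{2πi nₖ·γ}` has positive coefficients summing to 1 and satisfies
`H₀(q) = δ₀,q` for `q ∈ {0,1/2}^s`, and `B` satisfies `aᵀa + BᵀB = diag(a)`, then
`H₁ = B·w` satisfies the UEP equations. -/
theorem stmt_7 (s N v : ℕ) (a : Fin N → ℝ) (hpos : ∀ k, 0 < a k) (hsum : ∑ k, a k = 1)
    (n : Fin N → Fin s → ℤ) (hn : Function.Injective n)
    (H0 : (Fin s → ℝ) → ℂ)
    (hH0 : ∀ γ, H0 γ = ∑ k, (a k : ℂ) *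
      Complex.exp (2 * Real.pi * Complex.I * ∑ i, (n k i : ℂ) * (γ i : ℂ)))
    (hUEP0 : ∀ q : Fin s → ℝ, (∀ i, q i = 0 ∨ q i = 1 / 2) →
      H0 q = if q = 0 then 1 else 0)
    (B : Matrix (Fin v) (Fin N) ℝ)
    (hB : ∀ k t, a k * a t + (∑ i : Fin v, B i k * B i t) = if k = t then a k else 0)
    (H1 : Fin v → (Fin s → ℝ) → ℂ)
    (hH1 : ∀ i γ, H1 i γ = ∑ k, (B i k : ℂ) *
      Complex.exp (2 * Real.pi * Complex.I * ∑ j, (n k j : ℂ) * (γ j : ℂ))) :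
    ∀ γ q : Fin s → ℝ, (∀ i, q i = 0 ∨ q i = 1 / 2) →
      (starRingEnd ℂ) (H0 (γ + q)) * H0 γ +
        (∑ i : Fin v, (starRingEnd ℂ) (H1 i (γ + q)) * H1 i γ) =
      if q = 0 then 1 else 0 :=
  stmt_7_general s N v a n H0 hH0 hUEP0 B hB H1 hH1
end

section
/- Let a = (a₁, a₂, a₃, a₄) be a real vector with all entries strictly positive, and B = (b₁, b₂, b₃, b₄) a real vector such that the vectors vₖ = (aₖ, bₖ) ∈ ℝ² satisfy v₁ ⊥ v₃ and v₁ ⊥ v₄ and v₂ ⊥ v₃ with ⟨v₁, v₂⟩ = −⟨v₃, v₄⟩ ≠ 0. Then a contradiction follows, i.e., no such B exists. (Equivalently: a 4-tap orthonormal low-pass filter satisfying these UEP constraints cannot have all coefficients positive.) -/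
/-! Two vectors of `ℝ²` orthogonal to the same nonzero vector are parallel, and when both have
positive first coordinate they point the same way, so their inner product is positive. Applied to
`v₁, v₂ ⊥ v₃` and to `v₃, v₄ ⊥ v₁`, this makes both `⟨v₁, v₂⟩` and `⟨v₃, v₄⟩` positive, which is
incompatible with `⟨v₁, v₂⟩ = -⟨v₃, v₄⟩`. -/

theorem inner_pos_of_orthogonal_of_fst_pos {a₁ b₁ a₂ b₂ a b : ℝ} (h₁ : 0 < a₁) (h₂ : 0 < a₂)
    (hw : (a, b) ≠ 0) (o₁ : a₁ * a + b₁ * b = 0) (o₂ : a₂ * a + b₂ * b = 0) :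
    0 < a₁ * a₂ + b₁ * b₂ := by
  have hb : b ≠ 0 := by
    rintro rfl
    have ha : a = 0 := (mul_eq_zero.mp (by simpa using o₁)).resolve_left h₁.ne'
    exact hw (by simp [ha])
  have key : (a₁ * a₂ + b₁ * b₂) * b ^ 2 = a₁ * a₂ * (a ^ 2 + b ^ 2) := by
    linear_combination (b₂ * b) * o₁ - (a₁ * a) * o₂
  have : 0 < (a₁ * a₂ + b₁ * b₂) * b ^ 2 := key ▸ by positivity
  exact pos_of_mul_pos_left this (sq_nonneg b)

theorem stmt_18_general (a b : Fin 4 → ℝ) (hpos : ∀ k, 0 < a k)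
    (h13 : a 0 * a 2 + b 0 * b 2 = 0)
    (h14 : a 0 * a 3 + b 0 * b 3 = 0)
    (h23 : a 1 * a 2 + b 1 * b 2 = 0)
    (h12 : a 0 * a 1 + b 0 * b 1 = -(a 2 * a 3 + b 2 * b 3)) :
    False := by
  have hv : ∀ k, (a k, b k) ≠ 0 := fun k h => (hpos k).ne' (congrArg Prod.fst h)
  have h12pos : 0 < a 0 * a 1 + b 0 * b 1 :=
    inner_pos_of_orthogonal_of_fst_pos (hpos 0) (hpos 1) (hv 2) h13 h23
  have h34pos : 0 < a 2 * a 3 + b 2 * b 3 :=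
    inner_pos_of_orthogonal_of_fst_pos (hpos 2) (hpos 3) (hv 0)
      (by linear_combination h13) (by linear_combination h14)
  linarith

/-- A 4-tap orthonormal low-pass filter satisfying the UEP constraints cannot have all
coefficients positive: with `vₖ = (aₖ, bₖ)`, the relations `v₁ ⊥ v₃`, `v₁ ⊥ v₄`,
`v₂ ⊥ v₃`, `⟨v₁, v₂⟩ = −⟨v₃, v₄⟩ ≠ 0` and `aₖ > 0` for all `k` are contradictory. -/
theorem stmt_18 (a b : Fin 4 → ℝ) (hpos : ∀ k, 0 < a k)
    (h13 : a 0 * a 2 + b 0 * b 2 = 0)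
    (h14 : a 0 * a 3 + b 0 * b 3 = 0)
    (h23 : a 1 * a 2 + b 1 * b 2 = 0)
    (h12 : a 0 * a 1 + b 0 * b 1 = -(a 2 * a 3 + b 2 * b 3))
    (hne : a 0 * a 1 + b 0 * b 1 ≠ 0) :
    False :=
  stmt_18_general a b hpos h13 h14 h23 h12
end
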